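/- Let θ ∈ (0,∞) with θ ≠ 1/2 and θ ≠ 1, and let α be the unique real number with α³ = 6/(θ(1−θ)). For each λ ∈ (0,1) let c(λ) be the unique zero of f_λ(c) = (c/((2θ−1+2cθ)(2−2θ−c(2θ−1))))^((1−θ)/(θ−1/2)) − (2θ−1+2cθ)²/(1−λ) in I(θ). Then, as λ → 0⁺, c(λ) − [ (1−θ)/θ + ((1−θ)/(2θ))·α·λ^(1/3) + ((1−θ)²/(4θ))·α²·λ^(2/3) − (1/(40θ))(θ−2)(θ−1)(3θ−2)·α³·λ ] = O(λ^(4/3)). -/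

import Mathlib

open Real Asymptotics Filter

/-- The interval `I(θ)` in which the root `c` of `f` is located. -/
noncomputable def noTradeInterval (θ : ℝ) : Set ℝ :=
  if θ < 1/2 then Set.Ioi ((1 - θ)/θ)
  else if θ < 1 then Set.Ioo ((1 - θ)/θ) ((1 - θ)/(θ - 1/2))
  else Set.Ioo ((1 - θ)/θ) 0

/-!
Put `u = c - (1 - θ)/θ` and `x = λ^(1/3)`. Taking logarithms, `f_λ(c) = 0` becomes
`ℓ(u) = log (1 - λ)` with `ℓ(u) = ∑ gᵢ log (1 + aᵢ u)`. On the relevant domain `ℓ` is strictly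
decreasing, and since `∑ gᵢ aᵢ = ∑ gᵢ aᵢ² = 0` it is `b₃ u³ + b₄ u⁴ + b₅ u⁵ + O(u⁶)` with `b₃ < 0`.
The coefficients `k₁, k₂, k₃` of the claimed expansion invert `-(b₃ v³ + b₄ v⁴ + b₅ v⁵) = x³` to
order `x³`. Along the curve `k₁ x + k₂ x² + k₃ x³ + E x⁴` one has
`ℓ = -x³ + 3 b₃ k₁² E x⁶ + O(x⁶)` uniformly in `E`, so for `E = ± C` with `C` large these curves lie
on either side of `u`, by monotonicity of `ℓ`.
-/

open Topology

namespace GrowthOptimal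

theorem abs_log_one_add_sub_taylor_le {y : ℝ} (hy : |y| ≤ 1/2) :
    |log (1 + y) - (y - y^2/2 + y^3/3 - y^4/4 + y^5/5)| ≤ 2 * |y|^6 := by
  have h := abs_log_sub_add_sum_range_le (show |-y| < 1 by rw [abs_neg]; linarith) 5
  have hsum : ∑ i ∈ Finset.range 5, (-y) ^ (i + 1) / (i + 1)
      = -(y - y^2/2 + y^3/3 - y^4/4 + y^5/5) := by
    simp only [Finset.sum_range_succ, Finset.sum_range_zero]; norm_num; ring
  rw [hsum, sub_neg_eq_add, abs_neg, neg_add_eq_sub] at h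
  calc |log (1 + y) - (y - y^2/2 + y^3/3 - y^4/4 + y^5/5)| ≤ |y| ^ 6 / (1 - |y|) := h
    _ ≤ 2 * |y|^6 := by
        rw [div_le_iff₀ (by linarith)]
        nlinarith [pow_nonneg (abs_nonneg y) 6]

theorem isBigO_log_one_sub_add :
    (fun y : ℝ => log (1 - y) + y) =O[𝓝 0] (fun y => y^2) := by
  refine IsBigO.of_bound 2 ?_
  filter_upwards [Ioo_mem_nhds (show -(1/2 : ℝ) < 0 by norm_num)
    (show (0 : ℝ) < 1/2 by norm_num)] with y hy
  have hy' : |y| ≤ 1/2 := abs_le.mpr ⟨hy.1.le, hy.2.le⟩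
  have h := abs_log_sub_add_sum_range_le (show |y| < 1 by linarith) 1
  simp only [Finset.sum_range_one, zero_add, pow_one, Nat.cast_zero, div_one] at h
  rw [norm_eq_abs, norm_eq_abs, abs_pow, add_comm]
  calc |y + log (1 - y)| ≤ |y| ^ 2 / (1 - |y|) := h
    _ ≤ 2 * |y| ^ 2 := by
        rw [div_le_iff₀ (by linarith)]
        nlinarith [sq_nonneg |y|]

section LogCombination

variable {ι : Type*} [Fintype ι] (g a : ι → ℝ)

theorem exists_pos_abs_mul_le_half : ∃ δ > 0, ∀ v, |v| ≤ δ → ∀ i, |a i * v| ≤ 1/2 := by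
  refine ⟨1 / (2 * (∑ i, |a i| + 1)), by positivity, fun v hv i => ?_⟩
  have hsum : |a i| ≤ ∑ j, |a j| :=
    Finset.single_le_sum (fun j _ => abs_nonneg (a j)) (Finset.mem_univ i)
  rw [abs_mul]
  calc |a i| * |v| ≤ (∑ j, |a j| + 1) * (1 / (2 * (∑ j, |a j| + 1))) := by
        gcongr; linarith
    _ = 1/2 := by field_simp

theorem abs_sum_mul_log_sub_le (h₁ : ∑ i, g i * a i = 0) (h₂ : ∑ i, g i * a i ^ 2 = 0)
    {v : ℝ} (hv : ∀ i, |a i * v| ≤ 1/2) :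
    |∑ i, g i * log (1 + a i * v) - ((∑ i, g i * a i ^ 3) / 3 * v^3
        + (-(∑ i, g i * a i ^ 4) / 4) * v^4 + (∑ i, g i * a i ^ 5) / 5 * v^5)|
      ≤ (2 * ∑ i, |g i| * a i ^ 6) * v^6 := by
  have hpoly : (∑ i, g i * a i ^ 3) / 3 * v^3 + (-(∑ i, g i * a i ^ 4) / 4) * v^4
      + (∑ i, g i * a i ^ 5) / 5 * v^5
      = ∑ i, g i * (a i * v - (a i * v)^2/2 + (a i * v)^3/3 - (a i * v)^4/4
          + (a i * v)^5/5) := by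
    have : ∀ i, g i * (a i * v - (a i * v)^2/2 + (a i * v)^3/3 - (a i * v)^4/4
        + (a i * v)^5/5) = v * (g i * a i) - v^2/2 * (g i * a i ^ 2) + v^3/3 * (g i * a i ^ 3)
          - v^4/4 * (g i * a i ^ 4) + v^5/5 * (g i * a i ^ 5) := fun i => by ring
    simp only [this, Finset.sum_add_distrib, Finset.sum_sub_distrib, ← Finset.mul_sum, h₁, h₂]
    ring
  rw [hpoly, ← Finset.sum_sub_distrib, Finset.mul_sum, Finset.sum_mul]
  refine (Finset.abs_sum_le_sum_abs _ _).trans (Finset.sum_le_sum fun i _ => ?_)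
  rw [← mul_sub, abs_mul]
  calc |g i| * |log (1 + a i * v)
          - (a i * v - (a i * v)^2/2 + (a i * v)^3/3 - (a i * v)^4/4 + (a i * v)^5/5)|
      ≤ |g i| * (2 * |a i * v| ^ 6) :=
        mul_le_mul_of_nonneg_left (abs_log_one_add_sub_taylor_le (hv i)) (abs_nonneg _)
    _ = 2 * (|g i| * a i ^ 6) * v ^ 6 := by
        rw [show (6 : ℕ) = 2 * 3 from rfl, pow_mul, sq_abs]; ring

end LogCombination

section CubicInversion

variable {b₃ b₄ b₅ k₁ k₂ k₃ : ℝ}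

def barrier (k₁ k₂ k₃ E x : ℝ) : ℝ := x * (k₁ + k₂ * x + k₃ * x^2 + E * x^3)

/-- The identities `h₁`–`h₃` say that `k₁ x + k₂ x² + k₃ x³` inverts
`v ↦ -(b₃ v³ + b₄ v⁴ + b₅ v⁵)` to order `x³`. -/
theorem exists_barrier_defect (h₁ : b₃ * k₁^3 = -1) (h₂ : 3*b₃*k₁^2*k₂ + b₄*k₁^4 = 0)
    (h₃ : 3*b₃*k₁^2*k₃ + 3*b₃*k₁*k₂^2 + 4*b₄*k₁^3*k₂ + b₅*k₁^5 = 0) :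
    ∃ d : ℝ, ∀ E : ℝ, ∃ S : ℝ → ℝ, Continuous S ∧ S 0 = 3*b₃*k₁^2*E + d ∧
      ∀ x, b₃ * barrier k₁ k₂ k₃ E x ^ 3 + b₄ * barrier k₁ k₂ k₃ E x ^ 4
        + b₅ * barrier k₁ k₂ k₃ E x ^ 5 + x^3 = x^6 * S x := by
  refine ⟨b₃*k₂^3 + 6*b₃*k₁*k₂*k₃ + 6*b₄*k₁^2*k₂^2 + 4*b₄*k₁^3*k₃ + 5*b₅*k₁^4*k₂,
    fun E => ?_⟩
  let σ : ℝ → ℝ := fun x => k₃ + E * x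
  let ρ : ℝ → ℝ := fun x => k₂ + x * σ x
  refine ⟨fun x => 3*b₃*k₁^2*E + σ x * (6*b₃*k₁*k₂ + 4*b₄*k₁^3 + 3*b₃*k₁*x*σ x)
      + 5*b₅*k₁^4*ρ x + (6*b₄*k₁^2 + 10*b₅*k₁^3*x) * ρ x ^ 2
      + (b₃ + 4*b₄*k₁*x + 10*b₅*k₁^2*x^2) * ρ x ^ 3 + (b₄*x^2 + 5*b₅*k₁*x^3) * ρ x ^ 4
      + b₅*x^4 * ρ x ^ 5, by fun_prop, by simp only [σ, ρ]; ring, fun x => ?_⟩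
  simp only [barrier, σ, ρ]
  linear_combination x^3 * h₁ + x^4 * h₂ + x^5 * h₃

variable {F : ℝ → ℝ} {δ K : ℝ}

theorem exists_bound_along_barrier (hδ : 0 < δ)
    (hFP : ∀ v ∈ Set.Icc 0 δ, |F v - (b₃*v^3 + b₄*v^4 + b₅*v^5)| ≤ K * v^6) (hk₁ : 0 < k₁)
    (h₁ : b₃ * k₁^3 = -1) (h₂ : 3*b₃*k₁^2*k₂ + b₄*k₁^4 = 0)
    (h₃ : 3*b₃*k₁^2*k₃ + 3*b₃*k₁*k₂^2 + 4*b₄*k₁^3*k₂ + b₅*k₁^5 = 0) :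
    ∃ B : ℝ, ∀ E : ℝ, ∀ᶠ x in 𝓝[>] 0, barrier k₁ k₂ k₃ E x ∈ Set.Icc 0 δ ∧
      |F (barrier k₁ k₂ k₃ E x) + x^3 - 3*b₃*k₁^2*E*x^6| ≤ B * x^6 := by
  obtain ⟨d, hd⟩ := exists_barrier_defect h₁ h₂ h₃
  refine ⟨|d| + |K| * k₁^6 + 1, fun E => ?_⟩
  obtain ⟨S, hS, hS0, hPS⟩ := hd E
  set ψ : ℝ → ℝ := fun x => k₁ + k₂ * x + k₃ * x^2 + E * x^3
  have hψ : Continuous ψ := by fun_prop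
  have hψ0 : ψ 0 = k₁ := by simp [ψ]
  have hψ_pos : ∀ᶠ x in 𝓝 0, 0 < ψ x :=
    continuousAt_const.eventually_lt hψ.continuousAt (by rw [hψ0]; exact hk₁)
  have hbar_le : ∀ᶠ x in 𝓝 0, x * ψ x < δ :=
    (continuous_id.mul hψ).continuousAt.eventually_lt continuousAt_const (by simpa using hδ)
  have hS_near : ∀ᶠ x in 𝓝 0, |S x - S 0| < 1/2 := by
    have := hS.continuousAt.eventually (Metric.ball_mem_nhds (S 0) one_half_pos)
    simpa only [Metric.mem_ball, Real.dist_eq] using this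
  have hψ6 : ∀ᶠ x in 𝓝 0, |K| * ψ x ^ 6 < |K| * k₁^6 + 1/2 :=
    (by fun_prop : Continuous fun x => |K| * ψ x ^ 6).continuousAt.eventually_lt
      continuousAt_const (by simp only [hψ0]; linarith)
  filter_upwards [nhdsWithin_le_nhds (hψ_pos.and (hbar_le.and (hS_near.and hψ6))),
    self_mem_nhdsWithin] with x ⟨hψx, hbx, hSx, hKx⟩ (hx : 0 < x)
  have hbar : barrier k₁ k₂ k₃ E x = x * ψ x := rfl
  have hmem : barrier k₁ k₂ k₃ E x ∈ Set.Icc 0 δ :=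
    ⟨by rw [hbar]; positivity, by rw [hbar]; exact hbx.le⟩
  refine ⟨hmem, ?_⟩
  have hx6 : 0 < x^6 := by positivity
  calc |F (barrier k₁ k₂ k₃ E x) + x^3 - 3*b₃*k₁^2*E*x^6|
      = |(F (barrier k₁ k₂ k₃ E x) - (b₃ * barrier k₁ k₂ k₃ E x ^ 3
          + b₄ * barrier k₁ k₂ k₃ E x ^ 4 + b₅ * barrier k₁ k₂ k₃ E x ^ 5))
          + x^6 * (S x - S 0) + d * x^6| := by
        congr 1; linear_combination hPS x + x^6 * hS0
    _ ≤ K * barrier k₁ k₂ k₃ E x ^ 6 + x^6 * |S x - S 0| + |d| * x^6 := by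
        refine (abs_add_le _ _).trans (add_le_add ((abs_add_le _ _).trans (add_le_add
          (hFP _ hmem) ?_)) ?_)
        · rw [abs_mul, abs_of_pos hx6]
        · rw [abs_mul, abs_of_pos hx6]
    _ ≤ |K| * (x^6 * ψ x ^ 6) + x^6 * (1/2) + |d| * x^6 := by
        rw [hbar, mul_pow]
        gcongr
        · exact le_abs_self K
    _ ≤ (|d| + |K| * k₁^6 + 1) * x^6 := by nlinarith

theorem isBigO_sub_cubic_inverse {u : ℝ → ℝ} {D : Set ℝ} (hF : StrictAntiOn F D)
    (hδ : 0 < δ) (hδD : Set.Icc 0 δ ⊆ D)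
    (hFP : ∀ v ∈ Set.Icc 0 δ, |F v - (b₃*v^3 + b₄*v^4 + b₅*v^5)| ≤ K * v^6) (hk₁ : 0 < k₁)
    (h₁ : b₃ * k₁^3 = -1) (h₂ : 3*b₃*k₁^2*k₂ + b₄*k₁^4 = 0)
    (h₃ : 3*b₃*k₁^2*k₃ + 3*b₃*k₁*k₂^2 + 4*b₄*k₁^3*k₂ + b₅*k₁^5 = 0)
    (huD : ∀ᶠ x in 𝓝[>] 0, u x ∈ D)
    (hFu : (fun x => F (u x) + x^3) =O[𝓝[>] 0] (fun x => x^6)) :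
    (fun x => u x - (k₁*x + k₂*x^2 + k₃*x^3)) =O[𝓝[>] 0] (fun x => x^4) := by
  have hlead : 0 < -b₃ * k₁^2 := by nlinarith [pow_pos hk₁ 3, pow_pos hk₁ 2]
  obtain ⟨B, hB⟩ := exists_bound_along_barrier hδ hFP hk₁ h₁ h₂ h₃
  obtain ⟨M, hM⟩ := hFu.bound
  set C := (B + |M| + 1) / (3 * (-b₃ * k₁^2))
  have hC : 3*b₃*k₁^2*C = -(B + |M| + 1) := by
    linear_combination -(mul_div_cancel₀ (B + |M| + 1) (by positivity : 3 * (-b₃ * k₁^2) ≠ 0))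
  refine IsBigO.of_bound C ?_
  filter_upwards [hB C, hB (-C), hM, huD, self_mem_nhdsWithin]
    with x ⟨hCD, hCx⟩ ⟨hCD', hCx'⟩ hMx hux (hx : 0 < x)
  have hx6 : 0 < x^6 := by positivity
  rw [norm_eq_abs, norm_eq_abs, abs_of_pos hx6] at hMx
  have hMx' := abs_le.mp (hMx.trans (mul_le_mul_of_nonneg_right (le_abs_self M) hx6.le))
  have hCx := abs_le.mp hCx
  have hCx' := abs_le.mp hCx'
  -- `C` is chosen so that `F` along the barrier `E = C` (resp. `-C`) stays below `-x³ - |M| x⁶`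
  -- (resp. above `-x³ + |M| x⁶`), while `F (u x)` lies between these two values
  have hupper : u x < barrier k₁ k₂ k₃ C x :=
    (hF.lt_iff_gt (hδD hCD) hux).mp (by nlinarith)
  have hlower : barrier k₁ k₂ k₃ (-C) x < u x :=
    (hF.lt_iff_gt hux (hδD hCD')).mp (by nlinarith)
  rw [norm_eq_abs, norm_eq_abs, abs_of_pos (by positivity : (0:ℝ) < x^4), abs_le]
  simp only [barrier] at hupper hlower
  constructor <;> nlinarith

end CubicInversion

section LogProfile

variable {θ : ℝ}

/-- In the variable `u = c - (1 - θ)/θ`, the three factors `2θ - 1 + 2cθ`,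
`2 - 2θ - c(2θ - 1)` and `c` of `f_λ` are, up to constants, `1 + logSlope θ i * u`, and the
logarithm of `f_λ(c) = 0` reads `logProfile θ u = log (1 - λ)`. -/
noncomputable def logWeight (θ : ℝ) : Fin 3 → ℝ :=
  ![2 + (1 - θ)/(θ - 1/2), (1 - θ)/(θ - 1/2), -((1 - θ)/(θ - 1/2))]

noncomputable def logSlope (θ : ℝ) : Fin 3 → ℝ := ![2*θ, -((2*θ - 1) * θ/(1 - θ)), θ/(1 - θ)]

noncomputable def logProfile (θ v : ℝ) : ℝ := ∑ i, logWeight θ i * log (1 + logSlope θ i * v)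

def logDomain (θ : ℝ) : Set ℝ := Set.Ici 0 ∩ ⋂ i, {v | 0 < 1 + logSlope θ i * v}

theorem one_add_logSlope_zero_mul (hθ : θ ≠ 0) (c : ℝ) :
    1 + logSlope θ 0 * (c - (1 - θ)/θ) = 2*θ - 1 + 2*c*θ := by
  simp only [logSlope, Matrix.cons_val_zero]; field_simp; ring

theorem one_add_logSlope_one_mul (hθ : θ ≠ 0) (hθone : θ ≠ 1) (c : ℝ) :
    1 + logSlope θ 1 * (c - (1 - θ)/θ) = θ/(1 - θ) * (2 - 2*θ - c*(2*θ - 1)) := by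
  have : 1 - θ ≠ 0 := sub_ne_zero.mpr (Ne.symm hθone)
  simp only [logSlope, Matrix.cons_val_one, Matrix.cons_val_zero]; field_simp; ring

theorem one_add_logSlope_two_mul (hθ : θ ≠ 0) (hθone : θ ≠ 1) (c : ℝ) :
    1 + logSlope θ 2 * (c - (1 - θ)/θ) = θ/(1 - θ) * c := by
  have : 1 - θ ≠ 0 := sub_ne_zero.mpr (Ne.symm hθone)
  simp only [logSlope, Matrix.cons_val_two, Matrix.tail_cons, Matrix.head_cons]; field_simp; ring

theorem lt_and_pos_of_mem_noTradeInterval (hθ : 0 < θ) (hθhalf : θ ≠ 1/2) (hθone : θ ≠ 1)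
    {c : ℝ} (hc : c ∈ noTradeInterval θ) :
    (1 - θ)/θ < c ∧ 0 < θ/(1 - θ) * (2 - 2*θ - c*(2*θ - 1)) ∧ 0 < θ/(1 - θ) * c := by
  rcases lt_or_gt_of_ne hθhalf with hθ₁ | hθ₁
  · simp only [noTradeInterval, if_pos hθ₁, Set.mem_Ioi] at hc
    have hc₀ : 0 < c := (div_pos (by linarith) hθ).trans hc
    have hθ' : 0 < θ/(1 - θ) := div_pos hθ (by linarith)
    exact ⟨hc, mul_pos hθ' (by nlinarith), mul_pos hθ' hc₀⟩
  rcases lt_or_gt_of_ne hθone with hθ₂ | hθ₂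
  · simp only [noTradeInterval, if_neg (not_lt.mpr hθ₁.le), if_pos hθ₂, Set.mem_Ioo] at hc
    have hc₀ : 0 < c := (div_pos (by linarith) hθ).trans hc.1
    have hθ' : 0 < θ/(1 - θ) := div_pos hθ (by linarith)
    have hc₁ := (lt_div_iff₀ (by linarith : 0 < θ - 1/2)).mp hc.2
    exact ⟨hc.1, mul_pos hθ' (by linarith), mul_pos hθ' hc₀⟩
  · simp only [noTradeInterval, if_neg (not_lt.mpr hθ₁.le), if_neg (not_lt.mpr hθ₂.le),
      Set.mem_Ioo] at hc
    have hθ' : θ/(1 - θ) < 0 := div_neg_of_pos_of_neg hθ (by linarith)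
    have hc₁ := (div_lt_iff₀ hθ).mp hc.1
    exact ⟨hc.1, mul_pos_of_neg_of_neg hθ' (by linarith), mul_pos_of_neg_of_neg hθ' hc.2⟩

theorem sub_mem_logDomain (hθ : 0 < θ) (hθhalf : θ ≠ 1/2) (hθone : θ ≠ 1) {c : ℝ}
    (hc : c ∈ noTradeInterval θ) : c - (1 - θ)/θ ∈ logDomain θ := by
  obtain ⟨hc₀, hc₁, hc₂⟩ := lt_and_pos_of_mem_noTradeInterval hθ hθhalf hθone hc
  refine ⟨Set.mem_Ici.mpr (sub_nonneg.mpr hc₀.le), Set.mem_iInter.mpr fun i => ?_⟩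
  fin_cases i
  · show 0 < 1 + logSlope θ 0 * (c - (1 - θ)/θ)
    rw [one_add_logSlope_zero_mul hθ.ne']
    nlinarith [(div_lt_iff₀ hθ).mp hc₀]
  · show 0 < 1 + logSlope θ 1 * (c - (1 - θ)/θ)
    rwa [one_add_logSlope_one_mul hθ.ne' hθone]
  · show 0 < 1 + logSlope θ 2 * (c - (1 - θ)/θ)
    rwa [one_add_logSlope_two_mul hθ.ne' hθone]

theorem logProfile_sub_eq_log_one_sub (hθ : 0 < θ) (hθhalf : θ ≠ 1/2) (hθone : θ ≠ 1)
    {c lam : ℝ} (hc : c ∈ noTradeInterval θ) (hlam : lam < 1)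
    (hroot : (c / ((2*θ - 1 + 2*c*θ) * (2 - 2*θ - c*(2*θ - 1)))) ^ ((1 - θ)/(θ - 1/2))
        - (2*θ - 1 + 2*c*θ)^2 / (1 - lam) = 0) :
    logProfile θ (c - (1 - θ)/θ) = log (1 - lam) := by
  have hu := Set.mem_iInter.mp (sub_mem_logDomain hθ hθhalf hθone hc).2
  have h₀ : 0 < 2*θ - 1 + 2*c*θ := one_add_logSlope_zero_mul hθ.ne' c ▸ hu 0
  have h₁ : 0 < θ/(1 - θ) * (2 - 2*θ - c*(2*θ - 1)) :=
    one_add_logSlope_one_mul hθ.ne' hθone c ▸ hu 1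
  have h₂ : 0 < θ/(1 - θ) * c := one_add_logSlope_two_mul hθ.ne' hθone c ▸ hu 2
  have hθ' : θ/(1 - θ) ≠ 0 := div_ne_zero hθ.ne' (sub_ne_zero.mpr (Ne.symm hθone))
  have hbase : c / ((2*θ - 1 + 2*c*θ) * (2 - 2*θ - c*(2*θ - 1)))
      = θ/(1 - θ) * c / ((2*θ - 1 + 2*c*θ) * (θ/(1 - θ) * (2 - 2*θ - c*(2*θ - 1)))) := by
    rw [mul_left_comm (2*θ - 1 + 2*c*θ), mul_div_mul_left _ _ hθ']
  have hlog := congrArg log (sub_eq_zero.mp hroot)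
  rw [hbase, log_rpow (div_pos h₂ (mul_pos h₀ h₁)), log_div h₂.ne' (mul_pos h₀ h₁).ne',
    log_mul h₀.ne' h₁.ne', log_div (pow_pos h₀ 2).ne' (by linarith), log_pow] at hlog
  simp only [logProfile, Fin.sum_univ_three, logWeight, Matrix.cons_val_zero,
    Matrix.cons_val_one, Matrix.cons_val_two, Matrix.tail_cons, Matrix.head_cons,
    one_add_logSlope_zero_mul hθ.ne', one_add_logSlope_one_mul hθ.ne' hθone,
    one_add_logSlope_two_mul hθ.ne' hθone]
  push_cast at hlog
  linear_combination -hlog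

theorem hasDerivAt_logProfile {v : ℝ} (hv : ∀ i, 0 < 1 + logSlope θ i * v) :
    HasDerivAt (logProfile θ) (∑ i, logWeight θ i * (logSlope θ i / (1 + logSlope θ i * v))) v := by
  have h : ∀ i ∈ Finset.univ, HasDerivAt (fun w => logWeight θ i * log (1 + logSlope θ i * w))
      (logWeight θ i * (logSlope θ i / (1 + logSlope θ i * v))) v := fun i _ => by
    have hlin : HasDerivAt (fun w => 1 + logSlope θ i * w) (logSlope θ i) v := by
      simpa using ((hasDerivAt_id v).const_mul (logSlope θ i)).const_add 1
    have := ((hasDerivAt_log (hv i).ne').comp v hlin).const_mul (logWeight θ i)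
    rwa [inv_mul_eq_div] at this
  exact HasDerivAt.fun_sum h

theorem sum_logWeight_mul_div_eq (hθhalf : θ ≠ 1/2) (hθone : θ ≠ 1) {v : ℝ}
    (hv : ∀ i, 0 < 1 + logSlope θ i * v) :
    ∑ i, logWeight θ i * (logSlope θ i / (1 + logSlope θ i * v))
      = -(4 * θ^4 * v^2) / ((1 - θ)^2 * ∏ i, (1 + logSlope θ i * v)) := by
  have h₁ : 1 - θ ≠ 0 := sub_ne_zero.mpr (Ne.symm hθone)
  have h₂ : 2*θ - 1 ≠ 0 := fun h => hθhalf (by linarith)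
  simp only [Fin.sum_univ_three, Fin.prod_univ_three]
  generalize hA : 1 + logSlope θ 0 * v = A
  generalize hB : 1 + logSlope θ 1 * v = B
  generalize hC : 1 + logSlope θ 2 * v = C
  have hA₀ : A ≠ 0 := hA ▸ (hv 0).ne'
  have hB₀ : B ≠ 0 := hB ▸ (hv 1).ne'
  have hC₀ : C ≠ 0 := hC ▸ (hv 2).ne'
  field_simp
  subst hA hB hC
  simp only [logWeight, logSlope, Matrix.cons_val_zero, Matrix.cons_val_one,
    Matrix.cons_val_two, Matrix.tail_cons, Matrix.head_cons]
  field_simp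
  ring

theorem convex_setOf_one_add_mul_pos (a : ℝ) : Convex ℝ {v : ℝ | 0 < 1 + a * v} :=
  convex_iff_ordConnected.mpr ⟨fun x (hx : 0 < 1 + a * x) y (hy : 0 < 1 + a * y) z hz => by
    rcases le_total 0 a with ha | ha
    · exact lt_of_lt_of_le hx (by nlinarith [hz.1])
    · exact lt_of_lt_of_le hy (by nlinarith [hz.2])⟩

theorem strictAntiOn_logProfile (hθ : θ ≠ 0) (hθhalf : θ ≠ 1/2) (hθone : θ ≠ 1) :
    StrictAntiOn (logProfile θ) (logDomain θ) := by
  have hopen : IsOpen (⋂ i, {v : ℝ | 0 < 1 + logSlope θ i * v}) :=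
    isOpen_iInter_of_finite fun i => isOpen_lt continuous_const (by fun_prop)
  refine strictAntiOn_of_deriv_neg ((convex_Ici 0).inter
    (convex_iInter fun i => convex_setOf_one_add_mul_pos _)) (fun v hv => ?_) (fun v hv => ?_)
  · exact (hasDerivAt_logProfile (Set.mem_iInter.mp hv.2)).continuousAt.continuousWithinAt
  · rw [interior_inter, interior_Ici, hopen.interior_eq] at hv
    have hvi := Set.mem_iInter.mp hv.2
    rw [(hasDerivAt_logProfile hvi).deriv, sum_logWeight_mul_div_eq hθhalf hθone hvi]
    have hprod : 0 < ∏ i, (1 + logSlope θ i * v) := Finset.prod_pos fun i _ => hvi i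
    have hv₀ : 0 < v := hv.1
    have h₁ : 1 - θ ≠ 0 := sub_ne_zero.mpr (Ne.symm hθone)
    exact div_neg_of_neg_of_pos (neg_neg_of_pos (by positivity)) (by positivity)

theorem logProfile_moments (hθhalf : θ ≠ 1/2) (hθone : θ ≠ 1) :
    ∑ i, logWeight θ i * logSlope θ i = 0 ∧ ∑ i, logWeight θ i * logSlope θ i ^ 2 = 0 ∧
    ∑ i, logWeight θ i * logSlope θ i ^ 3 = -(4*θ^4/(1 - θ)^2) ∧
    ∑ i, logWeight θ i * logSlope θ i ^ 4 = -(16*θ^5/(1 - θ)^2) ∧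
    ∑ i, logWeight θ i * logSlope θ i ^ 5 = -(4*θ^6*(12*θ^2 - 22*θ + 11)/(1 - θ)^4) := by
  have h₁ : 1 - θ ≠ 0 := sub_ne_zero.mpr (Ne.symm hθone)
  have h₂ : 2*θ - 1 ≠ 0 := fun h => hθhalf (by linarith)
  simp only [Fin.sum_univ_three, logWeight, logSlope, Matrix.cons_val_zero, Matrix.cons_val_one,
    Matrix.cons_val_two, Matrix.tail_cons, Matrix.head_cons]
  refine ⟨?_, ?_, ?_, ?_, ?_⟩ <;> field_simp <;> ring

theorem logProfile_inverse_coefficients (hθ : θ ≠ 0) (hθhalf : θ ≠ 1/2) (hθone : θ ≠ 1)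
    {α : ℝ} (hα : α^3 = 6/(θ*(1 - θ))) :
    let b₃ := (∑ i, logWeight θ i * logSlope θ i ^ 3) / 3
    let b₄ := -(∑ i, logWeight θ i * logSlope θ i ^ 4) / 4
    let b₅ := (∑ i, logWeight θ i * logSlope θ i ^ 5) / 5
    let k₁ := (1 - θ)/(2*θ) * α
    let k₂ := (1 - θ)^2/(4*θ) * α^2
    let k₃ := -((1/(40*θ)) * (θ - 2) * (θ - 1) * (3*θ - 2) * α^3)
    0 < k₁ ∧ b₃ * k₁^3 = -1 ∧ 3*b₃*k₁^2*k₂ + b₄*k₁^4 = 0 ∧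
      3*b₃*k₁^2*k₃ + 3*b₃*k₁*k₂^2 + 4*b₄*k₁^3*k₂ + b₅*k₁^5 = 0 := by
  obtain ⟨-, -, m₃, m₄, m₅⟩ := logProfile_moments hθhalf hθone
  have h₁ : 1 - θ ≠ 0 := sub_ne_zero.mpr (Ne.symm hθone)
  have hk₁ : ((1 - θ)/(2*θ) * α)^3 = 3*(1 - θ)^2/(4*θ^4) := by
    rw [mul_pow, hα]; field_simp; ring
  simp only [m₃, m₄, m₅]
  refine ⟨(Odd.pow_pos_iff (by decide : Odd 3)).mp (hk₁ ▸ by positivity), ?_, ?_, ?_⟩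
  · rw [hk₁]
    field_simp
  · field_simp
    ring
  · field_simp
    ring

end LogProfile

theorem isBigO_comp_rpow_one_third {f : ℝ → ℝ} (hf : f =O[𝓝[>] 0] fun x => x^4) :
    (fun lam => f (lam ^ ((1:ℝ)/3))) =O[𝓝[>] 0] fun lam => lam ^ ((4:ℝ)/3) := by
  have hcbrt : Tendsto (fun lam : ℝ => lam ^ ((1:ℝ)/3)) (𝓝[>] 0) (𝓝[>] 0) := by
    refine tendsto_nhdsWithin_iff.mpr ⟨?_, eventually_nhdsWithin_of_forall fun lam hlam =>
      rpow_pos_of_pos hlam _⟩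
    have := (continuousAt_rpow_const 0 ((1:ℝ)/3) (Or.inr (by norm_num))).tendsto
    rw [zero_rpow (by norm_num)] at this
    exact this.mono_left nhdsWithin_le_nhds
  refine (hf.comp_tendsto hcbrt).congr' EventuallyEq.rfl ?_
  filter_upwards [self_mem_nhdsWithin] with lam (hlam : 0 < lam)
  simp only [Function.comp_apply]
  rw [← rpow_natCast, ← rpow_mul hlam.le]
  norm_num

theorem isBigO_root_cube_sub_expansion (θ α : ℝ) (hθ : 0 < θ) (hθhalf : θ ≠ 1/2) (hθone : θ ≠ 1)
    (hα : α^3 = 6/(θ*(1 - θ))) (c : ℝ → ℝ)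
    (hc : ∀ lam ∈ Set.Ioo (0:ℝ) 1, c lam ∈ noTradeInterval θ ∧
      logProfile θ (c lam - (1 - θ)/θ) = log (1 - lam)) :
    (fun x => c (x^3) - (1 - θ)/θ - ((1 - θ)/(2*θ) * α * x + (1 - θ)^2/(4*θ) * α^2 * x^2
        + -((1/(40*θ)) * (θ - 2) * (θ - 1) * (3*θ - 2) * α^3) * x^3)) =O[𝓝[>] 0] fun x => x^4 := by
  obtain ⟨m₁, m₂, -⟩ := logProfile_moments hθhalf hθone
  obtain ⟨hk₁, h₁, h₂, h₃⟩ := logProfile_inverse_coefficients hθ.ne' hθhalf hθone hα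
  obtain ⟨δ, hδ, hδa⟩ := exists_pos_abs_mul_le_half (logSlope θ)
  have hsmall : ∀ v ∈ Set.Icc 0 δ, ∀ i, |logSlope θ i * v| ≤ 1/2 := fun v hv =>
    hδa v (abs_le.mpr ⟨by linarith [hv.1], hv.2⟩)
  have hδD : Set.Icc 0 δ ⊆ logDomain θ := fun v hv => ⟨hv.1, Set.mem_iInter.mpr fun i =>
    show 0 < 1 + logSlope θ i * v by linarith [neg_abs_le (logSlope θ i * v), hsmall v hv i]⟩
  have hcube : ∀ᶠ x in 𝓝[>] (0:ℝ), x^3 ∈ Set.Ioo (0:ℝ) 1 := by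
    filter_upwards [Ioo_mem_nhdsGT one_pos] with x hx
    exact ⟨pow_pos hx.1 3, pow_lt_one₀ hx.1.le hx.2 (by norm_num)⟩
  have hlog : (fun x : ℝ => log (1 - x^3) + x^3) =O[𝓝[>] 0] fun x => x^6 := by
    have h3 : Tendsto (fun x : ℝ => x^3) (𝓝[>] 0) (𝓝 0) := by
      simpa using ((continuous_pow 3).tendsto (0:ℝ)).mono_left nhdsWithin_le_nhds
    simpa only [Function.comp_def, ← pow_mul] using isBigO_log_one_sub_add.comp_tendsto h3
  refine isBigO_sub_cubic_inverse (strictAntiOn_logProfile hθ.ne' hθhalf hθone) hδ hδD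
    (fun v hv => abs_sum_mul_log_sub_le _ _ m₁ m₂ (hsmall v hv)) hk₁ h₁ h₂ h₃
    (hcube.mono fun x hx => sub_mem_logDomain hθ hθhalf hθone (hc _ hx).1) ?_
  refine hlog.congr' (hcube.mono fun x hx => ?_) EventuallyEq.rfl
  exact congrArg (· + x^3) (hc _ hx).2.symm

end GrowthOptimal

open GrowthOptimal

theorem growth_optimal_c_expansion
    (θ α : ℝ) (hθ : 0 < θ) (hθhalf : θ ≠ 1/2) (hθone : θ ≠ 1)
    (hα : α^3 = 6/(θ*(1 - θ)))
    (c : ℝ → ℝ)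
    (hc : ∀ lam ∈ Set.Ioo (0:ℝ) 1, c lam ∈ noTradeInterval θ ∧
      (c lam / ((2*θ - 1 + 2*(c lam)*θ) * (2 - 2*θ - (c lam)*(2*θ - 1)))) ^ ((1 - θ)/(θ - 1/2))
        - (2*θ - 1 + 2*(c lam)*θ)^2 / (1 - lam) = 0) :
    (fun lam : ℝ => c lam -
        ((1 - θ)/θ + ((1 - θ)/(2*θ)) * α * lam ^ ((1:ℝ)/3)
          + ((1 - θ)^2/(4*θ)) * α^2 * lam ^ ((2:ℝ)/3)
          - (1/(40*θ)) * (θ - 2) * (θ - 1) * (3*θ - 2) * α^3 * lam))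
      =O[nhdsWithin 0 (Set.Ioi 0)] (fun lam : ℝ => lam ^ ((4:ℝ)/3)) := by
  have hlog : ∀ lam ∈ Set.Ioo (0:ℝ) 1, c lam ∈ noTradeInterval θ ∧
      logProfile θ (c lam - (1 - θ)/θ) = log (1 - lam) := fun lam hlam =>
    ⟨(hc lam hlam).1, logProfile_sub_eq_log_one_sub hθ hθhalf hθone (hc lam hlam).1 hlam.2
      (hc lam hlam).2⟩
  refine (isBigO_comp_rpow_one_third
    (isBigO_root_cube_sub_expansion θ α hθ hθhalf hθone hα c hlog)).congr' ?_ EventuallyEq.rfl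
  filter_upwards [self_mem_nhdsWithin] with lam (hlam : 0 < lam)
  have hpow : ∀ n : ℕ, (lam ^ ((1:ℝ)/3)) ^ n = lam ^ ((n:ℝ)/3) := fun n => by
    rw [← rpow_natCast, ← rpow_mul hlam.le, one_div_mul_eq_div]
  have h3 : (lam ^ ((1:ℝ)/3)) ^ 3 = lam := by rw [hpow]; norm_num
  have h2 : (lam ^ ((1:ℝ)/3)) ^ 2 = lam ^ ((2:ℝ)/3) := by rw [hpow]; norm_num
  simp only [h3, h2]
  ring
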